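/- The function G satisfies G(0) = 0, G(m) > 0 for all m > 0, G(m) → 0 as m → ∞, and G attains a global maximum on [0,∞) at some point m^b > 0 with G(m^b) > 0; hence the bifurcation threshold R_0^b = 1/G(m^b) is well defined and positive. -/
import Mathlib


/-- Density-dependent fecundity function ψ(M) = (1+(1−z)M/k)^{−(k+1)}. -/
noncomputable def psi (k z M : ℝ) : ℝ := (1 + (1 - z) * M / k) ^ (-(k + 1))

/-- Mating probability function φ(M) = 1 − ((1+(1−αz)M/k)/(1+(1−z)M/k))^{−(k+1)}. -/
noncomputable def phi (k z a M : ℝ) : ℝ :=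
  1 - ((1 + (1 - a * z) * M / k) / (1 + (1 - z) * M / k)) ^ (-(k + 1))

/-- Density-dependence function F(M) = ψ(M)·φ(M). -/
noncomputable def Ffun (k z a M : ℝ) : ℝ := psi k z M * phi k z a M

/-- G(m) = (1−c)F(m) + c(1−e_s)(1−e_h)F((1−e_h)m). -/
noncomputable def Gfun (k z a c eh es m : ℝ) : ℝ :=
  (1 - c) * Ffun k z a m + c * (1 - es) * (1 - eh) * Ffun k z a ((1 - eh) * m)

section Aux

variable {k z a : ℝ} (hk : 0 < k) (hz0 : 0 < z) (hz1 : z < 1) (ha0 : 0 < a) (ha1 : a < 1)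

lemma b1_pos (hk : 0 < k) (hz1 : z < 1) {M : ℝ} (hM : 0 ≤ M) :
    0 < 1 + (1 - z) * M / k := by
  have : 0 ≤ (1 - z) * M / k := div_nonneg (mul_nonneg (by linarith) hM) hk.le
  linarith

lemma b2_pos (hk : 0 < k) (hz0 : 0 < z) (hz1 : z < 1) (ha1 : a < 1) {M : ℝ} (hM : 0 ≤ M) :
    0 < 1 + (1 - a * z) * M / k := by
  have haz : a * z < z := by nlinarith
  have : 0 ≤ (1 - a * z) * M / k := div_nonneg (mul_nonneg (by nlinarith) hM) hk.le
  linarith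

lemma psi_pos (hk : 0 < k) (hz1 : z < 1) {M : ℝ} (hM : 0 ≤ M) : 0 < psi k z M :=
  Real.rpow_pos_of_pos (b1_pos hk hz1 hM) _

lemma ratio_one_le (hk : 0 < k) (hz0 : 0 < z) (hz1 : z < 1) (ha1 : a < 1) {M : ℝ}
    (hM : 0 ≤ M) :
    1 ≤ (1 + (1 - a * z) * M / k) / (1 + (1 - z) * M / k) := by
  rw [le_div_iff₀ (b1_pos hk hz1 hM), one_mul]
  have haz : a * z ≤ z := by nlinarith
  have : (1 - z) * M / k ≤ (1 - a * z) * M / k := by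
    have := mul_le_mul_of_nonneg_right (by linarith : (1-z) ≤ (1 - a*z)) hM
    gcongr
  linarith

lemma ratio_one_lt (hk : 0 < k) (hz0 : 0 < z) (hz1 : z < 1) (ha1 : a < 1) {M : ℝ}
    (hM : 0 < M) :
    1 < (1 + (1 - a * z) * M / k) / (1 + (1 - z) * M / k) := by
  rw [lt_div_iff₀ (b1_pos hk hz1 hM.le), one_mul]
  have haz : a * z < z := by nlinarith
  have hmul : (1 - z) * M < (1 - a * z) * M :=
    mul_lt_mul_of_pos_right (by linarith) hM
  have : (1 - z) * M / k < (1 - a * z) * M / k := div_lt_div_of_pos_right hmul hk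
  linarith

lemma phi_nonneg (hk : 0 < k) (hz0 : 0 < z) (hz1 : z < 1) (ha1 : a < 1) {M : ℝ}
    (hM : 0 ≤ M) : 0 ≤ phi k z a M := by
  have h := ratio_one_le hk hz0 hz1 ha1 hM (a := a)
  have : ((1 + (1 - a * z) * M / k) / (1 + (1 - z) * M / k)) ^ (-(k + 1)) ≤ 1 :=
    Real.rpow_le_one_of_one_le_of_nonpos h (by linarith)
  simpa [phi] using this

lemma phi_le_one (hk : 0 < k) (hz0 : 0 < z) (hz1 : z < 1) (ha1 : a < 1) {M : ℝ}
    (hM : 0 ≤ M) : phi k z a M ≤ 1 := by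
  have h : (0:ℝ) ≤ ((1 + (1 - a * z) * M / k) / (1 + (1 - z) * M / k)) ^ (-(k + 1)) :=
    Real.rpow_nonneg (div_nonneg (b2_pos hk hz0 hz1 ha1 hM).le (b1_pos hk hz1 hM).le) _
  unfold phi; linarith

lemma phi_pos (hk : 0 < k) (hz0 : 0 < z) (hz1 : z < 1) (ha1 : a < 1) {M : ℝ}
    (hM : 0 < M) : 0 < phi k z a M := by
  have h := ratio_one_lt hk hz0 hz1 ha1 hM (a := a)
  have : ((1 + (1 - a * z) * M / k) / (1 + (1 - z) * M / k)) ^ (-(k + 1)) < 1 :=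
    Real.rpow_lt_one_of_one_lt_of_neg h (by linarith)
  unfold phi; linarith

lemma Ffun_nonneg (hk : 0 < k) (hz0 : 0 < z) (hz1 : z < 1) (ha1 : a < 1) {M : ℝ}
    (hM : 0 ≤ M) : 0 ≤ Ffun k z a M :=
  mul_nonneg (psi_pos hk hz1 hM).le (phi_nonneg hk hz0 hz1 ha1 hM)

lemma Ffun_pos (hk : 0 < k) (hz0 : 0 < z) (hz1 : z < 1) (ha1 : a < 1) {M : ℝ}
    (hM : 0 < M) : 0 < Ffun k z a M :=
  mul_pos (psi_pos hk hz1 hM.le) (phi_pos hk hz0 hz1 ha1 hM)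

lemma Ffun_le_psi (hk : 0 < k) (hz0 : 0 < z) (hz1 : z < 1) (ha1 : a < 1) {M : ℝ}
    (hM : 0 ≤ M) : Ffun k z a M ≤ psi k z M := by
  have := phi_le_one hk hz0 hz1 ha1 hM (a := a)
  calc Ffun k z a M = psi k z M * phi k z a M := rfl
    _ ≤ psi k z M * 1 := by
        exact mul_le_mul_of_nonneg_left this (psi_pos hk hz1 hM).le
    _ = psi k z M := mul_one _

lemma Ffun_zero : Ffun k z a 0 = 0 := by
  simp [Ffun, phi]

lemma psi_tendsto (hk : 0 < k) (hz1 : z < 1) :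
    Filter.Tendsto (psi k z) Filter.atTop (nhds 0) := by
  have hbase : Filter.Tendsto (fun M => 1 + (1 - z) * M / k) Filter.atTop Filter.atTop := by
    apply Filter.tendsto_atTop_add_const_left
    apply Filter.Tendsto.atTop_div_const hk
    exact Filter.Tendsto.const_mul_atTop (by linarith) Filter.tendsto_id
  have h := (tendsto_rpow_neg_atTop (by linarith : (0:ℝ) < k + 1)).comp hbase
  exact h

lemma continuousOn_Ffun (hk : 0 < k) (hz0 : 0 < z) (hz1 : z < 1) (ha1 : a < 1) :
    ContinuousOn (Ffun k z a) (Set.Ici 0) := by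
  have hb1 : ContinuousOn (fun M : ℝ => 1 + (1 - z) * M / k) (Set.Ici 0) :=
    (continuous_const.add ((continuous_const.mul continuous_id).div_const k)).continuousOn
  have hb2 : ContinuousOn (fun M : ℝ => 1 + (1 - a * z) * M / k) (Set.Ici 0) :=
    (continuous_const.add ((continuous_const.mul continuous_id).div_const k)).continuousOn
  have hpsi : ContinuousOn (psi k z) (Set.Ici 0) := by
    apply hb1.rpow_const
    intro x hx
    exact Or.inl (b1_pos hk hz1 hx).ne'
  have hphi : ContinuousOn (phi k z a) (Set.Ici 0) := by
    apply continuousOn_const.sub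
    apply ContinuousOn.rpow_const
    · exact hb2.div hb1 fun x hx => (b1_pos hk hz1 hx).ne'
    · intro x hx
      exact Or.inl (div_pos (b2_pos hk hz0 hz1 ha1 hx) (b1_pos hk hz1 hx)).ne'
  exact hpsi.mul hphi

end Aux

/-- G(0) = 0, G(m) > 0 for m > 0, G(m) → 0 as m → ∞, and G attains a global maximum on
[0,∞) at some m^b > 0 with G(m^b) > 0; hence R_0^b = 1/G(m^b) is well defined and positive. -/
theorem stmt14 (k z a c eh es : ℝ)
    (hk : 0 < k) (hz : z ∈ Set.Ioo (0:ℝ) 1) (ha : a ∈ Set.Ioo (0:ℝ) 1)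
    (hc : c ∈ Set.Ioo (0:ℝ) 1) (heh : eh ∈ Set.Ico (0:ℝ) 1) (hes : es ∈ Set.Ico (0:ℝ) 1) :
    Gfun k z a c eh es 0 = 0 ∧
    (∀ m : ℝ, 0 < m → 0 < Gfun k z a c eh es m) ∧
    Filter.Tendsto (Gfun k z a c eh es) Filter.atTop (nhds 0) ∧
    ∃ mb : ℝ, 0 < mb ∧ (∀ m : ℝ, 0 ≤ m → Gfun k z a c eh es m ≤ Gfun k z a c eh es mb) ∧
      0 < Gfun k z a c eh es mb ∧ 0 < 1 / Gfun k z a c eh es mb := by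
  obtain ⟨hz0, hz1⟩ := hz
  obtain ⟨ha0, ha1⟩ := ha
  obtain ⟨hc0, hc1⟩ := hc
  obtain ⟨heh0, heh1⟩ := heh
  obtain ⟨hes0, hes1⟩ := hes
  have hehpos : 0 < 1 - eh := by linarith
  -- G(0) = 0
  have hG0 : Gfun k z a c eh es 0 = 0 := by
    simp [Gfun, Ffun_zero]
  -- G nonneg on [0,∞)
  have hGnonneg : ∀ m : ℝ, 0 ≤ m → 0 ≤ Gfun k z a c eh es m := by
    intro m hm
    have h1 := Ffun_nonneg hk hz0 hz1 ha1 hm (a := a)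
    have h2 := Ffun_nonneg hk hz0 hz1 ha1 (mul_nonneg hehpos.le hm) (a := a)
    have : 0 ≤ (1 - c) * Ffun k z a m := mul_nonneg (by linarith) h1
    have t1 : 0 ≤ (1 - c) * Ffun k z a m := mul_nonneg (by linarith) h1
    have t2 : 0 ≤ c * (1 - es) * (1 - eh) * Ffun k z a ((1 - eh) * m) :=
      mul_nonneg (mul_nonneg (mul_nonneg hc0.le (by linarith)) hehpos.le) h2
    unfold Gfun; linarith
  -- G positive on (0,∞)
  have hGpos : ∀ m : ℝ, 0 < m → 0 < Gfun k z a c eh es m := by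
    intro m hm
    have h1 := Ffun_pos hk hz0 hz1 ha1 hm (a := a)
    have h2 := (Ffun_nonneg hk hz0 hz1 ha1 (mul_nonneg hehpos.le hm.le) (a := a))
    have ht1 : 0 < (1 - c) * Ffun k z a m := mul_pos (by linarith) h1
    have ht2 : 0 ≤ c * (1 - es) * (1 - eh) * Ffun k z a ((1 - eh) * m) :=
      mul_nonneg (mul_nonneg (mul_nonneg hc0.le (by linarith)) hehpos.le) h2
    unfold Gfun
    linarith
  -- G tends to 0
  have hGtend : Filter.Tendsto (Gfun k z a c eh es) Filter.atTop (nhds 0) := by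
    have hpsi := psi_tendsto hk hz1
    have hpsi2 : Filter.Tendsto (fun m => psi k z ((1 - eh) * m)) Filter.atTop (nhds 0) :=
      hpsi.comp (Filter.Tendsto.const_mul_atTop hehpos Filter.tendsto_id)
    have hbound : Filter.Tendsto
        (fun m => (1 - c) * psi k z m + c * (1 - es) * (1 - eh) * psi k z ((1 - eh) * m))
        Filter.atTop (nhds 0) := by
      have := (hpsi.const_mul (1 - c)).add (hpsi2.const_mul (c * (1 - es) * (1 - eh)))
      simpa using this
    apply squeeze_zero' (g := fun m =>
      (1 - c) * psi k z m + c * (1 - es) * (1 - eh) * psi k z ((1 - eh) * m)) ?_ ?_ hbound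
    · filter_upwards [Filter.eventually_ge_atTop (0:ℝ)] with m hm
      exact hGnonneg m hm
    · filter_upwards [Filter.eventually_ge_atTop (0:ℝ)] with m hm
      have h1 := Ffun_le_psi hk hz0 hz1 ha1 hm (a := a)
      have h2 := Ffun_le_psi hk hz0 hz1 ha1 (mul_nonneg hehpos.le hm) (a := a)
      unfold Gfun
      have c1 : (0:ℝ) ≤ 1 - c := by linarith
      have c2 : (0:ℝ) ≤ c * (1 - es) * (1 - eh) :=
        mul_nonneg (mul_nonneg hc0.le (by linarith)) hehpos.le
      nlinarith
  refine ⟨hG0, hGpos, hGtend, ?_⟩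
  -- existence of maximum
  have hG1 : 0 < Gfun k z a c eh es 1 := hGpos 1 one_pos
  have hev : ∀ᶠ m in Filter.atTop, Gfun k z a c eh es m < Gfun k z a c eh es 1 :=
    hGtend.eventually_lt_const hG1
  obtain ⟨B, hB⟩ := Filter.eventually_atTop.mp hev
  set B' := max B 1 with hB'
  have hB'1 : (1:ℝ) ≤ B' := le_max_right _ _
  have hcont : ContinuousOn (Gfun k z a c eh es) (Set.Icc 0 B') := by
    have hF := continuousOn_Ffun hk hz0 hz1 ha1 (a := a)
    have h1 : ContinuousOn (fun m => Ffun k z a m) (Set.Ici 0) := hF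
    have h2 : ContinuousOn (fun m => Ffun k z a ((1 - eh) * m)) (Set.Ici 0) := by
      apply hF.comp (continuous_const.mul continuous_id).continuousOn
      intro x hx
      exact mul_nonneg hehpos.le hx
    exact ((h1.const_smul (1 - c)).add
      (h2.const_smul (c * (1 - es) * (1 - eh)))).mono (Set.Icc_subset_Ici_self)
  have hne : (Set.Icc (0:ℝ) B').Nonempty := ⟨0, by constructor <;> linarith⟩
  obtain ⟨mb, hmbmem, hmbmax⟩ := isCompact_Icc.exists_isMaxOn hne hcont
  have h1mem : (1:ℝ) ∈ Set.Icc (0:ℝ) B' := ⟨zero_le_one, hB'1⟩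
  have hGmb : Gfun k z a c eh es 1 ≤ Gfun k z a c eh es mb := hmbmax h1mem
  have hGmbpos : 0 < Gfun k z a c eh es mb := lt_of_lt_of_le hG1 hGmb
  have hmbpos : 0 < mb := by
    rcases lt_or_eq_of_le hmbmem.1 with h | h
    · exact h
    · exfalso; rw [← h] at hGmbpos; rw [hG0] at hGmbpos; exact lt_irrefl _ hGmbpos
  refine ⟨mb, hmbpos, ?_, hGmbpos, one_div_pos.mpr hGmbpos⟩
  intro m hm
  rcases le_or_gt m B' with hmB | hmB
  · exact hmbmax ⟨hm, hmB⟩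
  · have : Gfun k z a c eh es m < Gfun k z a c eh es 1 :=
      hB m (le_trans (le_max_left _ _) hmB.le)
    linarith
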